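/- Let $l \geq 1$ and let $K : \mathbb{R}^2 \to \mathbb{R}$ satisfy $|K(x_1,x_2)| \leq \frac{a}{(1 + |a x_1|)^2} \cdot \frac{1}{1 + x_2^2}$ with $a \geq 2^{-l}$, and let $H : \mathbb{R}^2 \to \mathbb{R}$ satisfy $\|H \chi_{A_k}\|_{L^1} \leq C_0$ for all $k \geq 0$, where $A_k = B(0,2^k) \setminus B(0,2^{k-1})$ (and $A_0 = B(0,1)$). Then the function $$L_2(x) = \chi_{\{|x| \leq 2^{10l}\}}(x) \int_{|y| > 2^{20l}} H(y) K(x-y)\, dy$$ satisfies $\|L_2\|_{L^1(\mathbb{R}^2)} \leq C\, C_0\, 2^{-9l}$. -/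

import Mathlib

open MeasureTheory Set Real
open scoped ENNReal

noncomputable section

/-- Euclidean norm on `ℝ × ℝ`. -/
def nrm2 (y : ℝ × ℝ) : ℝ := Real.sqrt (y.1 ^ 2 + y.2 ^ 2)

/-- The annulus `A_k = B(0, 2^k) \ B(0, 2^{k-1})` for `k ≥ 1`, with `A_0 = B(0,1)`. -/
def annulus' (k : ℕ) : Set (ℝ × ℝ) :=
  if k = 0 then {y | nrm2 y < 1}
  else {y | (2 : ℝ) ^ ((k : ℤ) - 1) ≤ nrm2 y ∧ nrm2 y < (2 : ℝ) ^ (k : ℤ)}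

/-! ### Auxiliary geometry lemmas -/

lemma continuous_nrm2 : Continuous nrm2 := by
  unfold nrm2; fun_prop

lemma measurableSet_annulus (k : ℕ) : MeasurableSet (annulus' k) := by
  unfold annulus'
  split
  · exact measurableSet_lt continuous_nrm2.measurable measurable_const
  · exact (measurableSet_le measurable_const continuous_nrm2.measurable).inter
      (measurableSet_lt continuous_nrm2.measurable measurable_const)

lemma abs_fst_le_nrm2 (y : ℝ × ℝ) : |y.1| ≤ nrm2 y := by
  rw [← Real.sqrt_sq_eq_abs]
  exact Real.sqrt_le_sqrt (by nlinarith [sq_nonneg y.2])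

lemma abs_snd_le_nrm2 (y : ℝ × ℝ) : |y.2| ≤ nrm2 y := by
  rw [← Real.sqrt_sq_eq_abs]
  exact Real.sqrt_le_sqrt (by nlinarith [sq_nonneg y.1])

lemma nrm2_le_two_mul_max (y : ℝ × ℝ) : nrm2 y ≤ 2 * max |y.1| |y.2| := by
  have h1 : |y.1| ≤ max |y.1| |y.2| := le_max_left _ _
  have h2 : |y.2| ≤ max |y.1| |y.2| := le_max_right _ _
  have hm : 0 ≤ max |y.1| |y.2| := le_trans (abs_nonneg _) h1
  have : nrm2 y ≤ Real.sqrt ((2 * max |y.1| |y.2|)^2) := by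
    apply Real.sqrt_le_sqrt
    have a1 : y.1^2 ≤ (max |y.1| |y.2|)^2 := by
      rw [← sq_abs y.1]; exact pow_le_pow_left₀ (abs_nonneg _) h1 2
    have a2 : y.2^2 ≤ (max |y.1| |y.2|)^2 := by
      rw [← sq_abs y.2]; exact pow_le_pow_left₀ (abs_nonneg _) h2 2
    nlinarith
  simpa [Real.sqrt_sq (by positivity : (0:ℝ) ≤ 2 * max |y.1| |y.2|)] using this

lemma exists_annulus_ge {y : ℝ × ℝ} (h1 : 1 ≤ nrm2 y) :
    ∃ k : ℕ, 1 ≤ k ∧ y ∈ annulus' k := by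
  have hex : ∃ n : ℕ, nrm2 y < 2 ^ n := pow_unbounded_of_one_lt _ one_lt_two
  classical
  set k := Nat.find hex with hkdef
  have hk : nrm2 y < 2 ^ k := Nat.find_spec hex
  have hk1 : 1 ≤ k := by
    rcases Nat.eq_zero_or_pos k with h | h
    · exfalso; rw [h] at hk; simp at hk; linarith
    · exact h
  have hlow : (2:ℝ) ^ (k-1) ≤ nrm2 y := by
    have := Nat.find_min hex (m := k - 1) (by omega)
    push_neg at this
    exact this
  refine ⟨k, hk1, ?_⟩
  unfold annulus'
  rw [if_neg (by omega)]
  refine ⟨?_, ?_⟩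
  · have : ((k:ℤ) - 1) = ((k-1 : ℕ) : ℤ) := by omega
    rw [this, zpow_natCast]; exact hlow
  · rw [zpow_natCast]; exact hk

lemma exists_mem_annulus (y : ℝ × ℝ) : ∃ k : ℕ, y ∈ annulus' k := by
  rcases lt_or_ge (nrm2 y) 1 with h | h
  · exact ⟨0, by simp [annulus', h]⟩
  · obtain ⟨k, _, hk⟩ := exists_annulus_ge h; exact ⟨k, hk⟩

/-! ### The measurable envelope lemma -/

lemma envelope (h : ℝ × ℝ → ℝ≥0∞) (C0 : ℝ≥0∞) (hC0 : C0 ≠ ∞)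
    (hh : ∀ k, ∫⁻ y in annulus' k, h y ≤ C0) :
    ∃ g : ℝ × ℝ → ℝ≥0∞, Measurable g ∧ g ≤ h ∧
      ∀ φ : ℝ × ℝ → ℝ≥0∞, Measurable φ → φ ≤ h → ∀ᵐ y, φ y ≤ g y := by
  classical
  set w : ℝ × ℝ → ℝ≥0∞ :=
    fun y => ∑' k : ℕ, (annulus' k).indicator (fun _ => (2:ℝ≥0∞)⁻¹ ^ k) y with hw
  have hwm : Measurable w :=
    Measurable.ennreal_tsum fun k => Measurable.indicator measurable_const (measurableSet_annulus k)
  have hwpos : ∀ y, w y ≠ 0 := by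
    intro y
    obtain ⟨k, hk⟩ := exists_mem_annulus y
    have hle : (2:ℝ≥0∞)⁻¹ ^ k ≤ w y := by
      have := ENNReal.le_tsum (f := fun k => (annulus' k).indicator (fun _ => (2:ℝ≥0∞)⁻¹ ^ k) y) k
      simpa [Set.indicator_of_mem hk] using this
    intro h0
    rw [h0] at hle
    simp only [le_zero_iff] at hle
    exact (pow_ne_zero k (by simp)) hle
  set μw := (volume : Measure (ℝ × ℝ)).withDensity w with hμw
  have hsum : μw = Measure.sum
      (fun k : ℕ => ((2:ℝ≥0∞)⁻¹ ^ k) • (volume : Measure (ℝ × ℝ)).restrict (annulus' k)) := by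
    have hwfun : w = ∑' k : ℕ, (fun y => (annulus' k).indicator (fun _ => (2:ℝ≥0∞)⁻¹ ^ k) y) := by
      funext y
      rw [hw]
      rw [tsum_apply (Pi.summable.mpr fun _ => ENNReal.summable)]
    rw [hμw, hwfun, withDensity_tsum
      (fun k => Measurable.indicator measurable_const (measurableSet_annulus k))]
    congr 1
    funext k
    rw [withDensity_indicator (measurableSet_annulus k), withDensity_const]
  have hint : ∀ f : ℝ × ℝ → ℝ≥0∞, f ≤ h → ∫⁻ y, f y ∂μw ≤ 2 * C0 := by
    intro f hf
    rw [hsum, lintegral_sum_measure]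
    have hterm : ∀ k : ℕ,
        ∫⁻ y, f y ∂(((2:ℝ≥0∞)⁻¹ ^ k) • (volume : Measure (ℝ × ℝ)).restrict (annulus' k))
        ≤ (2:ℝ≥0∞)⁻¹ ^ k * C0 := by
      intro k
      rw [lintegral_smul_measure]
      exact mul_le_mul_right (le_trans (lintegral_mono hf) (hh k)) _
    calc ∑' k, ∫⁻ y, f y ∂(((2:ℝ≥0∞)⁻¹ ^ k) • (volume : Measure (ℝ × ℝ)).restrict (annulus' k))
        ≤ ∑' k : ℕ, (2:ℝ≥0∞)⁻¹ ^ k * C0 := ENNReal.tsum_le_tsum hterm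
      _ = (∑' k : ℕ, (2:ℝ≥0∞)⁻¹ ^ k) * C0 := by rw [ENNReal.tsum_mul_right]
      _ = 2 * C0 := by rw [ENNReal.tsum_geometric]; norm_num
  obtain ⟨g, hgm, hgh, hEq⟩ := exists_measurable_le_lintegral_eq μw h
  refine ⟨g, hgm, hgh, ?_⟩
  intro φ hφm hφh
  set ψ := fun y => max (φ y) (g y) with hψ
  have hψm : Measurable ψ := hφm.max hgm
  have hψh : ψ ≤ h := fun y => max_le (hφh y) (hgh y)
  have h1 : ∫⁻ y, ψ y ∂μw ≤ ∫⁻ y, g y ∂μw :=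
    le_of_le_of_eq (lintegral_mono hψh) hEq
  have hfin : ∫⁻ y, g y ∂μw ≠ ∞ :=
    ne_top_of_le_ne_top (by exact ENNReal.mul_ne_top (by norm_num) hC0) (hint g hgh)
  have haeeq : (fun y => g y) =ᵐ[μw] ψ :=
    ae_eq_of_ae_le_of_lintegral_le (ae_of_all _ fun y => le_max_right _ _) hfin
      hψm.aemeasurable h1
  have haew : ∀ᵐ y ∂μw, φ y ≤ g y := by
    filter_upwards [haeeq] with y hy
    calc φ y ≤ ψ y := le_max_left _ _
      _ = g y := hy.symm
  rw [ae_iff] at haew ⊢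
  rw [hμw, withDensity_apply_eq_zero hwm] at haew
  have hsub : {y | ¬ φ y ≤ g y} ⊆ {x | w x ≠ 0} ∩ {a | ¬φ a ≤ g a} := fun y hy => ⟨hwpos y, hy⟩
  exact measure_mono_null hsub haew

/-! ### One-dimensional kernel bounds -/

def B1 (a t : ℝ) : ℝ≥0∞ := ENNReal.ofReal (a / (1 + |a * t|) ^ 2)
def B2 (t : ℝ) : ℝ≥0∞ := ENNReal.ofReal (1 / (1 + t ^ 2))

lemma B1_measurable (a : ℝ) : Measurable (B1 a) := by
  unfold B1; fun_prop

lemma B2_measurable : Measurable B2 := by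
  unfold B2; fun_prop

lemma B1_pos (a : ℝ) (ha : 0 < a) (t : ℝ) : B1 a t ≠ 0 := by
  unfold B1
  simp only [ne_eq, ENNReal.ofReal_eq_zero, not_le]
  positivity

lemma B2_pos (t : ℝ) : B2 t ≠ 0 := by
  unfold B2
  simp only [ne_eq, ENNReal.ofReal_eq_zero, not_le]
  positivity

lemma lintegral_B2_eq : ∫⁻ t : ℝ, B2 t = ENNReal.ofReal π := by
  unfold B2
  have h1 : ∀ t : ℝ, 1 / (1 + t^2) = (1 + t^2)⁻¹ := fun t => one_div _
  simp only [h1]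
  rw [← ofReal_integral_eq_lintegral_ofReal integrable_inv_one_add_sq
      (ae_of_all _ fun t => by positivity)]
  rw [integral_univ_inv_one_add_sq]

lemma lintegral_B2_sub (c : ℝ) : ∫⁻ t : ℝ, B2 (t - c) = ENNReal.ofReal π := by
  rw [lintegral_sub_right_eq_self B2 c, lintegral_B2_eq]

lemma lintegral_B1_sub {a : ℝ} (ha : 0 < a) (c : ℝ) :
    ∫⁻ t : ℝ, B1 a (t - c) ≤ ENNReal.ofReal π := by
  rw [lintegral_sub_right_eq_self (B1 a) c]
  have hbd : ∀ t : ℝ, B1 a t ≤ ENNReal.ofReal a * B2 (a * t) := by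
    intro t
    unfold B1 B2
    rw [← ENNReal.ofReal_mul ha.le]
    apply ENNReal.ofReal_le_ofReal
    rw [mul_one_div]
    apply div_le_div_of_nonneg_left ha.le (by positivity)
    nlinarith [abs_nonneg (a*t), sq_abs (a*t)]
  calc ∫⁻ t : ℝ, B1 a t ≤ ∫⁻ t : ℝ, ENNReal.ofReal a * B2 (a * t) := lintegral_mono hbd
    _ = ENNReal.ofReal a * ∫⁻ t : ℝ, B2 (a * t) :=
        lintegral_const_mul _ (B2_measurable.comp (measurable_const_mul a))
    _ = ENNReal.ofReal a * (ENNReal.ofReal |a⁻¹| * ∫⁻ t : ℝ, B2 t) := by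
        congr 1
        have : ∫⁻ t : ℝ, B2 (a * t) = ∫⁻ t : ℝ, B2 t ∂(Measure.map (a * ·) volume) :=
          (lintegral_map B2_measurable (measurable_const_mul a)).symm
        rw [this, Real.map_volume_mul_left (ne_of_gt ha), lintegral_smul_measure, smul_eq_mul]
    _ = ENNReal.ofReal π := by
        rw [lintegral_B2_eq, abs_of_pos (inv_pos.mpr ha), ← mul_assoc,
          ← ENNReal.ofReal_mul ha.le, mul_inv_cancel₀ (ne_of_gt ha), ENNReal.ofReal_one, one_mul]

lemma B1_tail {a : ℝ} (ha : 0 < a) {l : ℕ} (hal : (2:ℝ) ^ (-(l:ℤ)) ≤ a)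
    {u R : ℝ} (hR : 0 < R) (hu : R ≤ |u|) :
    B1 a u ≤ ENNReal.ofReal ((2:ℝ) ^ (l:ℤ) / R ^ 2) := by
  unfold B1
  apply ENNReal.ofReal_le_ofReal
  have h1 : (1 + |a * u|) ^ 2 ≥ a^2 * u^2 := by
    have : |a * u| ^ 2 = a^2 * u^2 := by rw [abs_mul, mul_pow, sq_abs, sq_abs]
    nlinarith [abs_nonneg (a * u)]
  have hu2 : R^2 ≤ u^2 := by
    rw [← sq_abs u]
    exact pow_le_pow_left₀ hR.le hu 2
  have hinv : a⁻¹ ≤ (2:ℝ) ^ (l:ℤ) := by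
    calc a⁻¹ ≤ ((2:ℝ) ^ (-(l:ℤ)))⁻¹ := by
          apply inv_anti₀ (by positivity) hal
      _ = (2:ℝ) ^ (l:ℤ) := by rw [← zpow_neg, neg_neg]
  have hu0 : u ≠ 0 := by
    intro h0; rw [h0] at hu; simp at hu; linarith
  calc a / (1 + |a * u|) ^ 2 ≤ a / (a^2 * u^2) := by
        apply div_le_div_of_nonneg_left ha.le (by positivity) h1
    _ = a⁻¹ / u^2 := by
        field_simp
    _ ≤ (2:ℝ) ^ (l:ℤ) / R^2 := by
        apply div_le_div₀ (by positivity) hinv (by positivity) hu2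

lemma B2_tail {u R : ℝ} (hR : 0 < R) (hu : R ≤ |u|) :
    B2 u ≤ ENNReal.ofReal (1 / R ^ 2) := by
  unfold B2
  apply ENNReal.ofReal_le_ofReal
  have hu2 : R^2 ≤ u^2 := by
    rw [← sq_abs u]
    exact pow_le_pow_left₀ hR.le hu 2
  apply div_le_div₀ (by norm_num) le_rfl (by positivity)
  nlinarith

/-! ### zpow arithmetic -/

lemma two_zpow_le {m n : ℤ} (h : m ≤ n) : (2:ℝ)^m ≤ (2:ℝ)^n := zpow_le_zpow_right₀ one_le_two h

lemma zpow_sq' (m : ℤ) : ((2:ℝ)^m)^(2:ℕ) = (2:ℝ)^(2*m) := by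
  rw [← zpow_natCast ((2:ℝ)^m) 2, ← zpow_mul]; ring_nf

lemma arith1 (l k : ℕ) (hl : 1 ≤ l) (hk : 20*l+1 ≤ k) :
    (2:ℝ)^(l:ℤ) / ((2:ℝ)^((k:ℤ)-3))^2 * (2 * (2:ℝ)^(10*l)) * 4 ≤ (2:ℝ)^((l:ℤ)+7-(k:ℤ)) := by
  have hL : (2:ℝ)^(l:ℤ) / ((2:ℝ)^((k:ℤ)-3))^2 * (2 * (2:ℝ)^(10*l)) * 4
      = (2:ℝ)^((l:ℤ) - 2*((k:ℤ)-3) + (10*l:ℤ) + 3) := by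
    rw [zpow_sq', ← zpow_natCast (2:ℝ) (10*l), div_eq_mul_inv, ← zpow_neg]
    rw [show ((l:ℤ) - 2*((k:ℤ)-3) + (10*l:ℤ) + 3)
        = (l:ℤ) + (-(2*((k:ℤ)-3))) + ((10*l:ℕ):ℤ) + 1 + 2 by push_cast; ring]
    rw [zpow_add₀ (two_ne_zero), zpow_add₀ (two_ne_zero), zpow_add₀ (two_ne_zero),
      zpow_add₀ (two_ne_zero)]
    norm_num
    ring
  rw [hL]
  apply two_zpow_le
  omega

/-! ### Main theorem -/

/-- with `|K(x)| ≤ a (1+|ax₁|)⁻² (1+x₂²)⁻¹`, `a ≥ 2^{-l}`, and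
`‖H χ_{A_k}‖₁ ≤ C₀` for all `k ≥ 0`, the error kernel
`L₂(x) = χ_{|x| ≤ 2^{10l}} ∫_{|y| > 2^{20l}} H(y) K(x-y) dy` satisfies
`‖L₂‖₁ ≤ C C₀ 2^{-9l}`. -/
theorem statement9 :
    ∃ C : ℝ, 0 < C ∧ ∀ l : ℕ, 1 ≤ l → ∀ a : ℝ, (2 : ℝ) ^ (-(l : ℤ)) ≤ a →
      ∀ C0 : ℝ, 0 < C0 →
      ∀ K H : ℝ × ℝ → ℝ,
      (∀ x : ℝ × ℝ, |K x| ≤ a / (1 + |a * x.1|) ^ 2 * (1 / (1 + x.2 ^ 2))) →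
      (∀ k : ℕ, (∫⁻ y in annulus' k, ENNReal.ofReal |H y|) ≤ ENNReal.ofReal C0) →
      (∫⁻ x in {x : ℝ × ℝ | nrm2 x ≤ (2 : ℝ) ^ (10 * l)},
          ENNReal.ofReal
            |∫ y in {y : ℝ × ℝ | (2 : ℝ) ^ (20 * l) < nrm2 y}, H y * K (x - y)|) ≤
        ENNReal.ofReal (C * C0 * 2 ^ (-(9 * l : ℤ))) := by
  refine ⟨128, by norm_num, ?_⟩
  intro l hl a ha C0 hC0 K H hK hH
  have ha0 : 0 < a := lt_of_lt_of_le (by positivity) ha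
  set M : ℝ := (2:ℝ) ^ (10 * l) with hM
  set Ball : Set (ℝ × ℝ) := {x : ℝ × ℝ | nrm2 x ≤ (2:ℝ) ^ (10 * l)} with hBall
  set S : Set (ℝ × ℝ) := {y : ℝ × ℝ | (2:ℝ) ^ (20 * l) < nrm2 y} with hS
  have hSm : MeasurableSet S := measurableSet_lt measurable_const continuous_nrm2.measurable
  have hBallm : MeasurableSet Ball := measurableSet_le continuous_nrm2.measurable measurable_const
  set h : ℝ × ℝ → ℝ≥0∞ := fun y => ENNReal.ofReal |H y| with hdef
  -- Step A: pointwise domination of the inner integral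
  have stepA : ∀ x : ℝ × ℝ, ENNReal.ofReal |∫ y in S, H y * K (x - y)| ≤
      ∫⁻ y in S, h y * (B1 a (x.1 - y.1) * B2 (x.2 - y.2)) := by
    intro x
    calc ENNReal.ofReal |∫ y in S, H y * K (x - y)|
        = ‖∫ y in S, H y * K (x - y)‖ₑ := (Real.enorm_eq_ofReal_abs _).symm
      _ ≤ ∫⁻ y in S, ‖H y * K (x - y)‖ₑ := enorm_integral_le_lintegral_enorm _
      _ ≤ _ := by
          apply lintegral_mono
          intro y
          show ‖H y * K (x - y)‖ₑ ≤ h y * (B1 a (x.1 - y.1) * B2 (x.2 - y.2))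
          rw [Real.enorm_eq_ofReal_abs, abs_mul,
            ENNReal.ofReal_mul (abs_nonneg _)]
          apply mul_le_mul_right
          unfold B1 B2
          rw [← ENNReal.ofReal_mul (by positivity)]
          apply ENNReal.ofReal_le_ofReal
          have := hK (x - y)
          simpa using this
  -- the measurable envelope g of h
  obtain ⟨g, hgm, hgh, hgmax⟩ := envelope h (ENNReal.ofReal C0) ENNReal.ofReal_ne_top hH
  have hgfin : ∀ y, g y ≠ ∞ := fun y => ne_top_of_le_ne_top ENNReal.ofReal_ne_top (hgh y)
  have hgann : ∀ k, ∫⁻ y in annulus' k, g y ≤ ENNReal.ofReal C0 :=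
    fun k => le_trans (lintegral_mono hgh) (hH k)
  -- Step B: replace h by g in the upper bound
  have stepB : ∀ x : ℝ × ℝ, (∫⁻ y in S, h y * (B1 a (x.1-y.1) * B2 (x.2-y.2))) ≤
      ∫⁻ y in S, g y * (B1 a (x.1-y.1) * B2 (x.2-y.2)) := by
    intro x
    obtain ⟨ψ, hψm, hψle, hψeq⟩ := exists_measurable_le_lintegral_eq (volume.restrict S)
      (fun y => h y * (B1 a (x.1-y.1) * B2 (x.2-y.2)))
    set Bx : ℝ×ℝ → ℝ≥0∞ := fun y => B1 a (x.1-y.1) * B2 (x.2-y.2) with hBx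
    have hBxm : Measurable Bx :=
      ((B1_measurable a).comp (measurable_const.sub measurable_fst)).mul
        (B2_measurable.comp (measurable_const.sub measurable_snd))
    have hBx0 : ∀ y, Bx y ≠ 0 := fun y => mul_ne_zero (B1_pos a ha0 _) (B2_pos _)
    have hBxfin : ∀ y, Bx y ≠ ∞ :=
      fun y => ENNReal.mul_ne_top ENNReal.ofReal_ne_top ENNReal.ofReal_ne_top
    set φ : ℝ×ℝ → ℝ≥0∞ := fun y => ψ y * (Bx y)⁻¹ with hφ
    have hφm : Measurable φ := hψm.mul hBxm.inv
    have hc : ∀ y, φ y * Bx y = ψ y := by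
      intro y
      rw [hφ]
      dsimp only
      rw [mul_assoc, ENNReal.inv_mul_cancel (hBx0 y) (hBxfin y), mul_one]
    have hφh : φ ≤ h := by
      intro y
      calc φ y = ψ y * (Bx y)⁻¹ := rfl
        _ ≤ (h y * Bx y) * (Bx y)⁻¹ := mul_le_mul_left (hψle y) _
        _ = h y := by rw [mul_assoc, ENNReal.mul_inv_cancel (hBx0 y) (hBxfin y), mul_one]
    have hφg := hgmax φ hφm hφh
    calc ∫⁻ y in S, h y * Bx y = ∫⁻ y in S, ψ y := hψeq
      _ = ∫⁻ y in S, φ y * Bx y := by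
          apply lintegral_congr
          intro y
          rw [hc y]
      _ ≤ ∫⁻ y in S, g y * Bx y := by
          apply lintegral_mono_ae
          filter_upwards [ae_restrict_of_ae hφg] with y hy
          exact mul_le_mul_left hy _
  -- Step C: Tonelli and the annulus decomposition
  have hFm : Measurable (fun p : (ℝ×ℝ)×(ℝ×ℝ) =>
      g p.2 * (B1 a (p.1.1 - p.2.1) * B2 (p.1.2 - p.2.2))) := by
    apply Measurable.mul
    · exact hgm.comp measurable_snd
    · exact (((B1_measurable a).comp ((measurable_fst.fst).sub (measurable_snd.fst))).mul
        (B2_measurable.comp ((measurable_fst.snd).sub (measurable_snd.snd))))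
  have hswap : (∫⁻ x in Ball, ∫⁻ y in S, g y * (B1 a (x.1-y.1) * B2 (x.2-y.2)))
      = ∫⁻ y in S, ∫⁻ x in Ball, g y * (B1 a (x.1-y.1) * B2 (x.2-y.2)) :=
    lintegral_lintegral_swap hFm.aemeasurable
  -- bound for the inner x-integral over each annulus
  have hJ : ∀ k : ℕ, 20*l+1 ≤ k → ∀ y : ℝ×ℝ, y ∈ annulus' k →
      (∫⁻ x in Ball, B1 a (x.1-y.1) * B2 (x.2-y.2))
        ≤ ENNReal.ofReal ((2:ℝ)^((l:ℤ)+7-(k:ℤ))) := by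
    intro k hk y hy
    have hk0 : k ≠ 0 := by omega
    have hyl : (2:ℝ)^((k:ℤ)-1) ≤ nrm2 y := by
      unfold annulus' at hy; rw [if_neg hk0] at hy; exact hy.1
    have hmax : (2:ℝ)^((k:ℤ)-2) ≤ max |y.1| |y.2| := by
      have h2 := nrm2_le_two_mul_max y
      have hE : (2:ℝ)^((k:ℤ)-1) = 2 * (2:ℝ)^((k:ℤ)-2) := by
        rw [show (k:ℤ)-1 = 1 + ((k:ℤ)-2) by ring, zpow_add₀ two_ne_zero, zpow_one]
      linarith
    have hM0 : 0 < M := by rw [hM]; positivity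
    have hMk : M ≤ (2:ℝ)^((k:ℤ)-3) := by
      rw [hM, ← zpow_natCast (2:ℝ) (10*l)]
      apply two_zpow_le; omega
    have hsub : Ball ⊆ (Icc (-M) M) ×ˢ (Icc (-M) M) := by
      intro x hx
      have hx' : nrm2 x ≤ M := hx
      have h1 : |x.1| ≤ M := le_trans (abs_fst_le_nrm2 x) hx'
      have h2 : |x.2| ≤ M := le_trans (abs_snd_le_nrm2 x) hx'
      exact ⟨mem_Icc.mpr (abs_le.mp h1), mem_Icc.mpr (abs_le.mp h2)⟩
    have key : ∀ t ∈ Icc (-M) M, ∀ c : ℝ, (2:ℝ)^((k:ℤ)-2) ≤ |c| →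
        (2:ℝ)^((k:ℤ)-3) ≤ |t - c| := by
      intro t ht c hc
      have h1 : |t| ≤ M := abs_le.mpr (mem_Icc.mp ht)
      have hE : (2:ℝ)^((k:ℤ)-2) = 2 * (2:ℝ)^((k:ℤ)-3) := by
        rw [show (k:ℤ)-2 = 1 + ((k:ℤ)-3) by ring, zpow_add₀ two_ne_zero, zpow_one]
      have habs : |c| - |t| ≤ |t - c| := by
        rw [abs_sub_comm]
        linarith [abs_sub_abs_le_abs_sub c t]
      linarith
    have hprod : (∫⁻ x in Ball, B1 a (x.1-y.1) * B2 (x.2-y.2))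
        ≤ (∫⁻ t in Icc (-M) M, B1 a (t - y.1)) * (∫⁻ t in Icc (-M) M, B2 (t - y.2)) := by
      calc (∫⁻ x in Ball, B1 a (x.1-y.1) * B2 (x.2-y.2))
          ≤ ∫⁻ x in (Icc (-M) M) ×ˢ (Icc (-M) M), B1 a (x.1-y.1) * B2 (x.2-y.2) :=
            lintegral_mono_set hsub
        _ = _ := by
            rw [Measure.volume_eq_prod, ← Measure.prod_restrict]
            exact lintegral_prod_mul
              (((B1_measurable a).comp (measurable_id.sub measurable_const)).aemeasurable)
              ((B2_measurable.comp (measurable_id.sub measurable_const)).aemeasurable)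
    have hfull1 : (∫⁻ t in Icc (-M) M, B1 a (t - y.1)) ≤ ENNReal.ofReal 4 :=
      le_trans (setLIntegral_le_lintegral _ _) (le_trans (lintegral_B1_sub ha0 _)
        (ENNReal.ofReal_le_ofReal (by linarith [Real.pi_le_four])))
    have hfull2 : (∫⁻ t in Icc (-M) M, B2 (t - y.2)) ≤ ENNReal.ofReal 4 := by
      refine le_trans (setLIntegral_le_lintegral _ _) ?_
      rw [lintegral_B2_sub]
      exact ENNReal.ofReal_le_ofReal (by linarith [Real.pi_le_four])
    have htail1 : ∀ c : ℝ, (2:ℝ)^((k:ℤ)-2) ≤ |c| →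
        (∫⁻ t in Icc (-M) M, B1 a (t - c)) ≤
          ENNReal.ofReal ((2:ℝ)^(l:ℤ) / ((2:ℝ)^((k:ℤ)-3))^2 * (2*M)) := by
      intro c hc
      have hstep : (∫⁻ t in Icc (-M) M, B1 a (t - c)) ≤
          ∫⁻ _t in Icc (-M) M, ENNReal.ofReal ((2:ℝ)^(l:ℤ) / ((2:ℝ)^((k:ℤ)-3))^2) := by
        apply setLIntegral_mono measurable_const
        intro t ht
        exact B1_tail ha0 ha (by positivity) (key t ht c hc)
      refine le_trans hstep ?_
      rw [setLIntegral_const, Real.volume_Icc, ← ENNReal.ofReal_mul (by positivity)]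
      apply ENNReal.ofReal_le_ofReal
      apply le_of_eq
      ring
    have htail2 : ∀ c : ℝ, (2:ℝ)^((k:ℤ)-2) ≤ |c| →
        (∫⁻ t in Icc (-M) M, B2 (t - c)) ≤
          ENNReal.ofReal (1 / ((2:ℝ)^((k:ℤ)-3))^2 * (2*M)) := by
      intro c hc
      have hstep : (∫⁻ t in Icc (-M) M, B2 (t - c)) ≤
          ∫⁻ _t in Icc (-M) M, ENNReal.ofReal (1 / ((2:ℝ)^((k:ℤ)-3))^2) := by
        apply setLIntegral_mono measurable_const
        intro t ht
        exact B2_tail (by positivity) (key t ht c hc)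
      refine le_trans hstep ?_
      rw [setLIntegral_const, Real.volume_Icc, ← ENNReal.ofReal_mul (by positivity)]
      apply ENNReal.ofReal_le_ofReal
      apply le_of_eq
      ring
    rcases le_max_iff.mp hmax with h1 | h2
    · refine le_trans hprod (le_trans (mul_le_mul' (htail1 _ h1) hfull2) ?_)
      rw [← ENNReal.ofReal_mul (by positivity)]
      apply ENNReal.ofReal_le_ofReal
      rw [hM]
      exact arith1 l k hl hk
    · refine le_trans hprod (le_trans (mul_le_mul' hfull1 (htail2 _ h2)) ?_)
      rw [← ENNReal.ofReal_mul (by norm_num)]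
      apply ENNReal.ofReal_le_ofReal
      have hone : (1:ℝ) ≤ (2:ℝ)^(l:ℤ) := by
        calc (1:ℝ) = (2:ℝ)^(0:ℤ) := by norm_num
          _ ≤ (2:ℝ)^(l:ℤ) := two_zpow_le (by omega)
      have hR2 : (0:ℝ) < ((2:ℝ)^((k:ℤ)-3))^2 := by positivity
      have hq : 1 / ((2:ℝ)^((k:ℤ)-3))^2 ≤ (2:ℝ)^(l:ℤ) / ((2:ℝ)^((k:ℤ)-3))^2 :=
        div_le_div₀ (by positivity) hone hR2 le_rfl
      calc 4 * (1 / ((2:ℝ)^((k:ℤ)-3))^2 * (2*M))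
          ≤ (2:ℝ)^(l:ℤ) / ((2:ℝ)^((k:ℤ)-3))^2 * (2*M) * 4 := by nlinarith
        _ ≤ _ := by rw [hM]; exact arith1 l k hl hk
  -- split S into annuli and sum up
  have hsplit : S ⊆ ⋃ j : ℕ, annulus' (20*l+1+j) := by
    intro y hy
    have hy' : (2:ℝ)^(20*l) < nrm2 y := hy
    have h1 : 1 ≤ nrm2 y := le_trans (one_le_pow₀ one_le_two) hy'.le
    obtain ⟨k, hk1, hk⟩ := exists_annulus_ge h1
    have hup : nrm2 y < (2:ℝ)^(k:ℕ) := by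
      unfold annulus' at hk; rw [if_neg (by omega)] at hk
      simpa [zpow_natCast] using hk.2
    have hk2 : 20*l + 1 ≤ k := by
      have hpow : (2:ℝ)^(20*l) < (2:ℝ)^(k:ℕ) := lt_trans hy' hup
      have := (pow_lt_pow_iff_right₀ one_lt_two).mp hpow
      omega
    refine mem_iUnion.mpr ⟨k - (20*l+1), ?_⟩
    have heq : 20*l+1 + (k - (20*l+1)) = k := by omega
    rw [heq]; exact hk
  have hC0' : (0:ℝ) ≤ C0 := hC0.le
  have hterm : ∀ j : ℕ, C0 * ((2:ℝ)^((l:ℤ)+7-((20*l+1+j:ℕ):ℤ)))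
      = (C0 * (2:ℝ)^((l:ℤ)+6-(20*l:ℤ))) * (1/2:ℝ)^j := by
    intro j
    have hexp : ((l:ℤ)+7-((20*l+1+j:ℕ):ℤ)) = ((l:ℤ)+6-(20*l:ℤ)) + (-(j:ℤ)) := by
      push_cast; ring
    rw [hexp, zpow_add₀ two_ne_zero, zpow_neg, zpow_natCast, ← inv_pow, one_div]
    ring
  have hsummable : Summable (fun j : ℕ => C0 * ((2:ℝ)^((l:ℤ)+7-((20*l+1+j:ℕ):ℤ)))) := by
    simp only [hterm]
    exact summable_geometric_two.mul_left _
  have htsum : (∑' j : ℕ, C0 * ((2:ℝ)^((l:ℤ)+7-((20*l+1+j:ℕ):ℤ))))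
      = (C0 * (2:ℝ)^((l:ℤ)+6-(20*l:ℤ))) * 2 := by
    simp only [hterm]
    rw [tsum_mul_left, tsum_geometric_two]
  calc ∫⁻ x in Ball, ENNReal.ofReal |∫ y in S, H y * K (x - y)|
      ≤ ∫⁻ x in Ball, ∫⁻ y in S, g y * (B1 a (x.1-y.1) * B2 (x.2-y.2)) := by
        apply lintegral_mono
        intro x
        exact le_trans (stepA x) (stepB x)
    _ = ∫⁻ y in S, ∫⁻ x in Ball, g y * (B1 a (x.1-y.1) * B2 (x.2-y.2)) := hswap
    _ ≤ ∑' j : ℕ, ∫⁻ y in annulus' (20*l+1+j),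
          ∫⁻ x in Ball, g y * (B1 a (x.1-y.1) * B2 (x.2-y.2)) :=
        le_trans (lintegral_mono_set hsplit) (lintegral_iUnion_le _ _)
    _ ≤ ∑' j : ℕ, ENNReal.ofReal C0 * ENNReal.ofReal ((2:ℝ)^((l:ℤ)+7-((20*l+1+j:ℕ):ℤ))) := by
        apply ENNReal.tsum_le_tsum
        intro j
        have hkge : 20*l+1 ≤ 20*l+1+j := by omega
        calc ∫⁻ y in annulus' (20*l+1+j), ∫⁻ x in Ball, g y * (B1 a (x.1-y.1) * B2 (x.2-y.2))
            = ∫⁻ y in annulus' (20*l+1+j),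
                g y * ∫⁻ x in Ball, (B1 a (x.1-y.1) * B2 (x.2-y.2)) := by
              apply lintegral_congr
              intro y
              exact lintegral_const_mul' _ _ (hgfin y)
          _ ≤ ∫⁻ y in annulus' (20*l+1+j),
                g y * ENNReal.ofReal ((2:ℝ)^((l:ℤ)+7-((20*l+1+j:ℕ):ℤ))) := by
              apply lintegral_mono_ae
              filter_upwards [ae_restrict_mem (measurableSet_annulus (20*l+1+j))] with y hy
              exact mul_le_mul_right (hJ (20*l+1+j) hkge y hy) _
          _ = (∫⁻ y in annulus' (20*l+1+j), g y)
                * ENNReal.ofReal ((2:ℝ)^((l:ℤ)+7-((20*l+1+j:ℕ):ℤ))) :=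
              lintegral_mul_const' _ _ ENNReal.ofReal_ne_top
          _ ≤ ENNReal.ofReal C0 * ENNReal.ofReal ((2:ℝ)^((l:ℤ)+7-((20*l+1+j:ℕ):ℤ))) :=
              mul_le_mul_left (hgann _) _
    _ = ∑' j : ℕ, ENNReal.ofReal (C0 * ((2:ℝ)^((l:ℤ)+7-((20*l+1+j:ℕ):ℤ)))) := by
        congr 1
        funext j
        rw [← ENNReal.ofReal_mul hC0']
    _ = ENNReal.ofReal (∑' j : ℕ, C0 * ((2:ℝ)^((l:ℤ)+7-((20*l+1+j:ℕ):ℤ)))) :=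
        (ENNReal.ofReal_tsum_of_nonneg (fun j => by positivity) hsummable).symm
    _ ≤ ENNReal.ofReal (128 * C0 * 2 ^ (-(9 * l : ℤ))) := by
        apply ENNReal.ofReal_le_ofReal
        rw [htsum]
        have e1 : (2:ℝ)^((l:ℤ)+6-(20*l:ℤ)) * 2 = 2^((l:ℤ)+7-20*l) := by
          rw [show ((l:ℤ)+7-20*(l:ℤ)) = ((l:ℤ)+6-20*l)+1 by ring, zpow_add₀ two_ne_zero, zpow_one]
        have e2 : (128:ℝ) * (2:ℝ)^(-(9*l:ℤ)) = 2^(7-(9*l:ℤ)) := by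
          rw [show (7-(9*(l:ℤ))) = 7 + (-(9*(l:ℤ))) by ring, zpow_add₀ two_ne_zero]
          norm_num
        have hle : (2:ℝ)^((l:ℤ)+6-(20*l:ℤ)) * 2 ≤ 128 * (2:ℝ)^(-(9*l:ℤ)) := by
          rw [e1, e2]
          apply two_zpow_le
          omega
        calc C0 * (2:ℝ)^((l:ℤ)+6-(20*l:ℤ)) * 2
            = C0 * ((2:ℝ)^((l:ℤ)+6-(20*l:ℤ)) * 2) := by ring
          _ ≤ C0 * (128 * (2:ℝ)^(-(9*l:ℤ))) := by
              apply mul_le_mul_of_nonneg_left hle hC0'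
          _ = 128 * C0 * 2 ^ (-(9 * l : ℤ)) := by
              ring
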